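/- arXiv:1112.0270 — 2 statements merged into one kernel-verified Lean document; each statement's English description precedes it below -/
import Mathlib

section
/- Let n ≥ 1 be an integer, let α_1,…,α_n, β, λ be real numbers with β ≠ λ. Suppose x_1,…,x_n : ℝ → ℝ satisfy x_k(0) = 0 for all k and, for every real t, x_1 is differentiable at t with derivative α_1 e^{−λt} − β x_1(t) and, for each 2 ≤ k ≤ n, x_k is differentiable at t with derivative α_k x_{k−1}(t) − β x_k(t). Then for every real t, x_n(t) = ((∏_{j=1}^n α_j) / (β − λ)^n) · e^{−λt} · P(n, (β − λ)t), where P is the normalised lower incomplete gamma function. -/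
/-!
Each equation of the cascade has the form `u' = g - β u`, whose solutions are determined by
`u 0` (multiply by the integrating factor `exp (β t)`), so by induction along the cascade it
suffices to check that the closed form solves it. With `μ = β - λ`, the stage-`k` output for unit
gains is `Q k t = exp (-λ t) P(k, μ t) / μ ^ k`, the general output is `(∏ α j) Q k`, and
`Q 1' = exp (-λ t) - β Q 1`, `Q (k+1)' = Q k - β Q (k+1)`. The second identity is the recurrence
`P(k+1, x) = P(k, x) - exp (-x) x ^ k / k!`, obtained by integrating by parts.
-/

/-- The normalised lower incomplete gamma function `P(n, x)` for integer `n ≥ 1`: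
`P(n, x) = (1/(n-1)!) ∫_0^x e^{-s} s^{n-1} ds`. -/
noncomputable def normIncGamma (n : ℕ) (x : ℝ) : ℝ :=
  (∫ s in (0:ℝ)..x, Real.exp (-s) * s ^ (n - 1)) / (Nat.factorial (n - 1))

open Real Finset

lemma normIncGamma_zero_right (n : ℕ) : normIncGamma n 0 = 0 := by
  simp [normIncGamma]

lemma hasDerivAt_normIncGamma (n : ℕ) (x : ℝ) :
    HasDerivAt (normIncGamma n) (exp (-x) * x ^ (n - 1) / (n - 1).factorial) x := by
  have hc : Continuous fun s : ℝ => exp (-s) * s ^ (n - 1) := by fun_prop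
  exact (intervalIntegral.integral_hasDerivAt_right (hc.intervalIntegrable 0 x)
    hc.aestronglyMeasurable.stronglyMeasurableAtFilter hc.continuousAt).div_const _

lemma normIncGamma_one (x : ℝ) : normIncGamma 1 x = 1 - exp (-x) := by
  simp [normIncGamma, intervalIntegral.integral_comp_neg (fun s => exp s), integral_exp]

lemma normIncGamma_succ {k : ℕ} (hk : k ≠ 0) (x : ℝ) :
    normIncGamma (k + 1) x = normIncGamma k x - exp (-x) * x ^ k / k.factorial := by
  have hparts : ∫ s in (0:ℝ)..x, exp (-s) * s ^ k =
      -exp (-x) * x ^ k + k * ∫ s in (0:ℝ)..x, exp (-s) * s ^ (k - 1) := by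
    have := intervalIntegral.integral_mul_deriv_eq_deriv_mul (a := 0) (b := x)
      (u := fun s => s ^ k) (v := fun s => -exp (-s)) (u' := fun s => k * s ^ (k - 1))
      (v' := fun s => exp (-s)) (fun s _ => hasDerivAt_pow k s)
      (fun s _ => ((hasDerivAt_neg s).exp.neg).congr_deriv (by ring))
      (by apply Continuous.intervalIntegrable; fun_prop)
      (by apply Continuous.intervalIntegrable; fun_prop)
    simp only [mul_comm (exp _)] at this ⊢
    rw [this]
    simp [← intervalIntegral.integral_const_mul, hk, mul_assoc, mul_comm]
  obtain ⟨j, rfl⟩ : ∃ j, k = j + 1 := ⟨k - 1, by omega⟩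
  simp only [normIncGamma, Nat.add_sub_cancel, hparts, Nat.factorial_succ]
  push_cast
  field_simp
  ring

section
variable {E : Type*} [NormedAddCommGroup E] [NormedSpace ℝ E]

theorem eq_of_hasDerivAt_sub_smul_self {β : ℝ} {g u v : ℝ → E}
    (hu : ∀ t, HasDerivAt u (g t - β • u t) t) (hv : ∀ t, HasDerivAt v (g t - β • v t) t)
    (h0 : u 0 = v 0) (t : ℝ) : u t = v t := by
  -- the integrating factor `exp (β s)` turns `u - v` into a constant
  have hconst : ∀ s, HasDerivAt (fun s => exp (β * s) • (u s - v s)) 0 s := by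
    intro s
    refine (((hasDerivAt_id s).const_mul β).exp.smul ((hu s).sub (hv s))).congr_deriv ?_
    simp only [id, mul_one, Pi.sub_apply]
    module
  have := is_const_of_deriv_eq_zero (fun s => (hconst s).differentiableAt)
    (fun s => (hconst s).deriv) t 0
  simpa [h0, sub_eq_zero] using this

end

structure IsCascadeSolution (n : ℕ) (r : ℝ → ℝ) (α : ℕ → ℝ) (β : ℝ) (x : ℕ → ℝ → ℝ) :
    Prop where
  hasDerivAt_one : ∀ t, HasDerivAt (x 1) (r t - β * x 1 t) t
  hasDerivAt_of_le : ∀ k, 2 ≤ k → k ≤ n → ∀ t, HasDerivAt (x k) (α k * x (k - 1) t - β * x k t) t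

theorem IsCascadeSolution.unique {n : ℕ} {r : ℝ → ℝ} {α : ℕ → ℝ} {β : ℝ} {x y : ℕ → ℝ → ℝ}
    (hx : IsCascadeSolution n r α β x) (hy : IsCascadeSolution n r α β y)
    (h0 : ∀ k, 1 ≤ k → k ≤ n → x k 0 = y k 0) : ∀ k, 1 ≤ k → k ≤ n → x k = y k := by
  intro k hk1
  induction k, hk1 using Nat.le_induction with
  | base =>
    intro hn
    exact funext (eq_of_hasDerivAt_sub_smul_self hx.hasDerivAt_one hy.hasDerivAt_one
      (h0 1 le_rfl hn))
  | succ k hk ih =>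
    intro hkn
    have hxy := ih (by omega)
    refine funext (eq_of_hasDerivAt_sub_smul_self (g := fun t => α (k + 1) * x k t)
      (hx.hasDerivAt_of_le (k + 1) (by omega) hkn) ?_ (h0 (k + 1) (by omega) hkn))
    simpa [hxy] using hy.hasDerivAt_of_le (k + 1) (by omega) hkn

noncomputable def unitCascade (β lam : ℝ) (k : ℕ) (t : ℝ) : ℝ :=
  exp (-lam * t) * normIncGamma k ((β - lam) * t) / (β - lam) ^ k

section
variable {β lam : ℝ}

lemma unitCascade_zero_right (k : ℕ) : unitCascade β lam k 0 = 0 := by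
  simp [unitCascade, normIncGamma_zero_right]

lemma hasDerivAt_unitCascade (hβ : β ≠ lam) {k : ℕ} (hk : k ≠ 0) (t : ℝ) :
    HasDerivAt (unitCascade β lam k) (-lam * unitCascade β lam k t +
      exp (-lam * t) * exp (-((β - lam) * t)) * t ^ (k - 1) / (k - 1).factorial) t := by
  have hμ : β - lam ≠ 0 := sub_ne_zero.mpr hβ
  have hP := (hasDerivAt_normIncGamma k ((β - lam) * t)).comp t
    ((hasDerivAt_id t).const_mul (β - lam))
  refine ((((hasDerivAt_id t).const_mul (-lam)).exp.mul hP).div_const _).congr_deriv ?_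
  obtain ⟨j, rfl⟩ : ∃ j, k = j + 1 := ⟨k - 1, by omega⟩
  simp only [unitCascade, id, Function.comp_apply, Nat.add_sub_cancel, mul_pow]
  field_simp
  ring

lemma hasDerivAt_unitCascade_one (hβ : β ≠ lam) (t : ℝ) :
    HasDerivAt (unitCascade β lam 1) (exp (-lam * t) - β * unitCascade β lam 1 t) t := by
  refine (hasDerivAt_unitCascade hβ one_ne_zero t).congr_deriv ?_
  have hμ : β - lam ≠ 0 := sub_ne_zero.mpr hβ
  simp only [unitCascade, normIncGamma_one]
  field_simp
  ring

lemma hasDerivAt_unitCascade_succ (hβ : β ≠ lam) {k : ℕ} (hk : k ≠ 0) (t : ℝ) :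
    HasDerivAt (unitCascade β lam (k + 1))
      (unitCascade β lam k t - β * unitCascade β lam (k + 1) t) t := by
  refine (hasDerivAt_unitCascade hβ k.add_one_ne_zero t).congr_deriv ?_
  have hμ : β - lam ≠ 0 := sub_ne_zero.mpr hβ
  simp only [unitCascade, normIncGamma_succ hk, Nat.add_sub_cancel, mul_pow]
  field_simp
  ring

lemma isCascadeSolution_prod_mul_unitCascade (hβ : β ≠ lam) (n : ℕ) (α : ℕ → ℝ) :
    IsCascadeSolution n (fun t => α 1 * exp (-lam * t)) α β
      (fun k t => (∏ j ∈ Icc 1 k, α j) * unitCascade β lam k t) where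
  hasDerivAt_one t := by
    rw [Icc_self, prod_singleton]
    exact ((hasDerivAt_unitCascade_one hβ t).const_mul (α 1)).congr_deriv (by ring)
  hasDerivAt_of_le k hk _ t := by
    obtain ⟨j, rfl⟩ : ∃ j, k = j + 1 := ⟨k - 1, by omega⟩
    rw [prod_Icc_succ_top (by omega)]
    refine ((hasDerivAt_unitCascade_succ hβ (by omega) t).const_mul _).congr_deriv ?_
    simp only [Nat.add_sub_cancel]
    ring

end

/-- output of a weakly activated linear cascade of length `n` with exponentially
decaying stimulus `α 1 * e^{-λ t}`, identical inactivation rates `β ≠ λ`, and resting initial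
conditions: `x n t = ((∏ αⱼ)/(β-λ)ⁿ) e^{-λ t} P(n, (β-λ) t)`. -/
theorem cascade_output_decaying_stimulus
    (n : ℕ) (hn : 1 ≤ n) (α : ℕ → ℝ) (β lam : ℝ) (hβ : β ≠ lam)
    (x : ℕ → ℝ → ℝ)
    (h0 : ∀ k, 1 ≤ k → k ≤ n → x k 0 = 0)
    (h1 : ∀ t : ℝ, HasDerivAt (x 1) (α 1 * Real.exp (-lam * t) - β * x 1 t) t)
    (hk : ∀ k, 2 ≤ k → k ≤ n → ∀ t : ℝ,
      HasDerivAt (x k) (α k * x (k - 1) t - β * x k t) t) :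
    ∀ t : ℝ, x n t = ((∏ j ∈ Finset.Icc 1 n, α j) / (β - lam) ^ n) *
      Real.exp (-lam * t) * normIncGamma n ((β - lam) * t) := by
  intro t
  have hx := IsCascadeSolution.unique ⟨h1, hk⟩ (isCascadeSolution_prod_mul_unitCascade hβ n α)
    (fun k hk1 hkn => by simp [h0 k hk1 hkn, unitCascade_zero_right]) n hn le_rfl
  rw [congrFun hx t, unitCascade]
  ring
end

section
/- Let n ≥ 1 be an integer, let α_1, α_2,…,α_n, β, ε, λ be real numbers with β ≠ 0, β + ε ≠ 0, β ≠ λ, and β + ε ≠ λ, and for an index 1 ≤ i ≤ n let H_i be the ε-perturbed cascade rate matrix. Then H_i and I + λH_i⁻¹ are invertible, and for any two indices 1 ≤ i < h ≤ n, the solutions of the exponentially-decaying-stimulus cascades with perturbation at position i and at position h agree on all components at or below position h: for every index j with h ≤ j ≤ n (and also for every j with 1 ≤ j < i) and every real t, the j-th component of α_1 (exp(tH_i) − e^{−λt} I) H_i⁻¹ (I + λH_i⁻¹)⁻¹ e_1 equals the j-th component of α_1 (exp(tH_h) − e^{−λt} I) H_h⁻¹ (I + λH_h⁻¹)⁻¹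 e_1. -/
open Matrix

/-- The ε-perturbed cascade rate matrix `H_i` (1-based index `i` of the perturbed component):
`H_i (j,j) = -β` for `j ≠ i`, `H_i (i,i) = -(β+ε)`, `H_i (j+1, j) = α (j+1)`, zeros elsewhere. -/
noncomputable def perturbedCascadeMatrix (n : ℕ) (α : ℕ → ℝ) (β ε : ℝ) (i : ℕ) :
    Matrix (Fin n) (Fin n) ℝ :=
  fun r c =>
    if r = c then (if r.val + 1 = i then -(β + ε) else -β)
    else if r.val = c.val + 1 then α (r.val + 1)
    else 0

/-- The `j`-th standard basis vector of `ℝ^n` (1-based `j`). -/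
def stdBasisVec (n j : ℕ) : Fin n → ℝ := fun r => if r.val + 1 = j then 1 else 0

/-- The solution at time `t` of the exponentially-decaying-stimulus cascade
`ẋ = H x + α₁ e^{-λ t} e₁`, `x 0 = 0`, namely
`α₁ (exp(t H) - e^{-λ t} I) H⁻¹ (I + λ H⁻¹)⁻¹ e₁`. -/
noncomputable def decaySol (n : ℕ) (α₁ lam : ℝ) (H : Matrix (Fin n) (Fin n) ℝ) (t : ℝ) :
    Fin n → ℝ :=
  α₁ • (((NormedSpace.exp (t • H) - Real.exp (-lam * t) • (1 : Matrix (Fin n) (Fin n) ℝ))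
    * H⁻¹ * (1 + lam • H⁻¹)⁻¹) *ᵥ stdBasisVec n 1)

/-!
Shifting by `λ`, the solution is `α₁ e^{-λt} (exp(tA) - 1) A⁻¹ e₁ = α₁ e^{-λt} ∑ₖ tᵏ⁺¹/(k+1)! Aᵏ e₁`
with `A = H + λ I` lower bidiagonal. For such `A` with diagonal `d` and subdiagonal `s`, the
generating function `Gⱼ(X) = ∑ₖ (Aᵏ e₁)ⱼ Xᵏ` satisfies `∏_{m ≤ j} (1 - dₘ X) · Gⱼ = s₁ ⋯ sⱼ Xʲ`, so
`Gⱼ` depends on `d₀, …, dⱼ` only through the multiset of their values. Moving the perturbation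
from position `i` to position `h` changes neither that multiset for the rows at or below `h`, nor
the values themselves for the rows above `i`.
-/

open PowerSeries Finset

open scoped Nat

section MatrixExp

variable {m 𝕂 : Type*} [Fintype m] [DecidableEq m] [RCLike 𝕂]

open scoped Matrix.Norms.Operator in
theorem Matrix.exp_smul_eq_exp_smul_add_smul_one (A : Matrix m m 𝕂) (t c : 𝕂) :
    NormedSpace.exp (t • A) = NormedSpace.exp (-(c * t)) • NormedSpace.exp (t • (A + c • 1)) := by
  have hsplit : t • A = t • (A + c • 1) + (-(c * t)) • (1 : Matrix m m 𝕂) := by module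
  rw [hsplit, Matrix.exp_add_of_commute _ _ ((Commute.one_right _).smul_right _),
    ← Algebra.algebraMap_eq_smul_one (-(c * t))]
  -- `erw`: the operator-norm topology on matrices is the product topology only up to defeq
  erw [← NormedSpace.algebraMap_exp_comm]
  rw [Algebra.algebraMap_eq_smul_one, mul_smul_one]

open scoped Matrix.Norms.Operator in
theorem Matrix.hasSum_exp_sub_one_mul_inv {A : Matrix m m 𝕂} (hA : IsUnit A.det) (t : 𝕂) :
    HasSum (fun k : ℕ => (t ^ (k + 1) / (k + 1)! : 𝕂) • A ^ k)
      ((NormedSpace.exp (t • A) - 1) * A⁻¹) := by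
  have h := ((hasSum_nat_add_iff' 1).2
    (NormedSpace.exp_series_hasSum_exp' (𝕂 := 𝕂) (t • A))).mul_right A⁻¹
  have hterm (k : ℕ) : ((k + 1)! : 𝕂)⁻¹ • (t • A) ^ (k + 1) * A⁻¹
      = (t ^ (k + 1) / (k + 1)! : 𝕂) • A ^ k := by
    rw [smul_pow, smul_smul, smul_mul_assoc, pow_succ A, mul_assoc, mul_nonsing_inv A hA,
      mul_one, inv_mul_eq_div]
  simp only [hterm, Finset.range_one, Finset.sum_singleton, pow_zero, Nat.factorial_zero,
    Nat.cast_one, inv_one, one_smul] at h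
  exact h

theorem Matrix.hasSum_exp_sub_one_mul_inv_mulVec_apply {A : Matrix m m 𝕂} (hA : IsUnit A.det)
    (t : 𝕂) (v : m → 𝕂) (j : m) :
    HasSum (fun k : ℕ => t ^ (k + 1) / (k + 1)! * (A ^ k *ᵥ v) j)
      ((((NormedSpace.exp (t • A) - 1) * A⁻¹) *ᵥ v) j) := by
  have h := (hasSum_exp_sub_one_mul_inv hA t).map (mulVec.addMonoidHomLeft v)
    (continuous_id.matrix_mulVec continuous_const)
  simpa [smul_mulVec] using Pi.hasSum.1 h j

end MatrixExp

theorem Matrix.one_add_smul_inv_mul_self {m R : Type*} [Fintype m] [DecidableEq m] [CommRing R]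
    {H : Matrix m m R} (hH : IsUnit H.det) (c : R) : (1 + c • H⁻¹) * H = H + c • 1 := by
  rw [add_mul, one_mul, smul_mul, nonsing_inv_mul H hH]

theorem decaySol_eq {n : ℕ} (α₁ lam : ℝ) {H : Matrix (Fin n) (Fin n) ℝ} (hH : IsUnit H.det)
    (t : ℝ) :
    decaySol n α₁ lam H t = (α₁ * Real.exp (-lam * t)) •
      (((NormedSpace.exp (t • (H + lam • 1)) - 1) * (H + lam • 1)⁻¹) *ᵥ stdBasisVec n 1) := by
  have hinv : H⁻¹ * (1 + lam • H⁻¹)⁻¹ = (H + lam • 1)⁻¹ := by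
    rw [← Matrix.mul_inv_rev, one_add_smul_inv_mul_self hH]
  rw [decaySol, mul_assoc, hinv, exp_smul_eq_exp_smul_add_smul_one _ t lam, ← Real.exp_eq_exp_ℝ,
    neg_mul, ← smul_sub, smul_mul, smul_mulVec, smul_smul]

theorem decaySol_apply_eq_of_pow_mulVec_apply_eq {n : ℕ} (α₁ lam : ℝ)
    {H H' : Matrix (Fin n) (Fin n) ℝ} (hH : IsUnit H.det) (hH' : IsUnit H'.det)
    (hA : IsUnit (H + lam • 1).det) (hA' : IsUnit (H' + lam • 1).det) {j : Fin n}
    (hpow : ∀ k : ℕ, ((H + lam • 1) ^ k *ᵥ stdBasisVec n 1) j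
      = ((H' + lam • 1) ^ k *ᵥ stdBasisVec n 1) j) (t : ℝ) :
    decaySol n α₁ lam H t j = decaySol n α₁ lam H' t j := by
  rw [decaySol_eq α₁ lam hH, decaySol_eq α₁ lam hH', Pi.smul_apply, Pi.smul_apply]
  congr 1
  refine (hasSum_exp_sub_one_mul_inv_mulVec_apply hA t _ j).unique ?_
  simpa only [hpow] using hasSum_exp_sub_one_mul_inv_mulVec_apply hA' t _ j

theorem PowerSeries.one_sub_C_mul_X_mul_mk {R : Type*} [CommRing R] {f g : ℕ → R} {a : R}
    (h : ∀ k, f (k + 1) = a * f k + g k) : (1 - C a * X) * mk f = C (f 0) + X * mk g := by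
  ext (_ | k)
  · simp
  · simp [sub_mul, mul_assoc, coeff_succ_X_mul, h]

noncomputable def Matrix.powMulVecGenFun {m R : Type*} [Fintype m] [DecidableEq m] [CommRing R]
    (M : Matrix m m R) (v : m → R) (j : m) : R⟦X⟧ :=
  mk fun k => (M ^ k *ᵥ v) j

def lowerBidiagonal {R : Type*} [Zero R] (n : ℕ) (d s : ℕ → R) : Matrix (Fin n) (Fin n) R :=
  fun r c => if r = c then d r else if r.val = c.val + 1 then s r else 0

namespace lowerBidiagonal

section CommRing

variable {R : Type*} [CommRing R] {n : ℕ} (d s : ℕ → R)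

theorem isLowerTriangular : (lowerBidiagonal n d s).IsLowerTriangular := by
  intro r c hrc
  have hrc : r.val < c.val := hrc
  simp [lowerBidiagonal, Fin.ext_iff, hrc.ne, show r.val ≠ c.val + 1 by omega]

theorem det_eq : (lowerBidiagonal n d s).det = ∏ r : Fin n, d r := by
  simp [det_of_isLowerTriangular _ (isLowerTriangular d s), lowerBidiagonal]

theorem add_smul_one (c : R) :
    lowerBidiagonal n d s + c • 1 = lowerBidiagonal n (fun m => d m + c) s := by
  ext r c'
  by_cases h : r = c' <;> simp [lowerBidiagonal, one_apply, h]

theorem mulVec_apply_zero (x : Fin n → R) (h : 0 < n) :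
    (lowerBidiagonal n d s *ᵥ x) ⟨0, h⟩ = d 0 * x ⟨0, h⟩ := by
  rw [mulVec, dotProduct, Fintype.sum_eq_single ⟨0, h⟩]
  · simp [lowerBidiagonal]
  · intro c hc
    simp [lowerBidiagonal, Ne.symm hc]

theorem mulVec_apply_succ (x : Fin n → R) {j : ℕ} (h : j + 1 < n) :
    (lowerBidiagonal n d s *ᵥ x) ⟨j + 1, h⟩
      = d (j + 1) * x ⟨j + 1, h⟩ + s (j + 1) * x ⟨j, by omega⟩ := by
  rw [mulVec, dotProduct, Fintype.sum_eq_add ⟨j + 1, h⟩ ⟨j, by omega⟩ (by simp [Fin.ext_iff])]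
  · simp [lowerBidiagonal]
  · rintro c ⟨hc₁, hc₂⟩
    simp only [ne_eq, Fin.ext_iff] at hc₁ hc₂
    simp [lowerBidiagonal, Fin.ext_iff, Ne.symm hc₁, Ne.symm hc₂]

end CommRing

variable {n : ℕ} (d s : ℕ → ℝ)

theorem one_sub_C_mul_X_mul_powMulVecGenFun_zero (h : 0 < n) :
    (1 - C (d 0) * X) * (lowerBidiagonal n d s).powMulVecGenFun (stdBasisVec n 1) ⟨0, h⟩ = 1 := by
  rw [powMulVecGenFun, one_sub_C_mul_X_mul_mk (g := 0) fun k => by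
    rw [pow_succ', ← mulVec_mulVec, mulVec_apply_zero, Pi.zero_apply, add_zero]]
  rw [show (mk 0 : ℝ⟦X⟧) = 0 from rfl, mul_zero, add_zero, pow_zero, one_mulVec]
  simp [stdBasisVec]

theorem one_sub_C_mul_X_mul_powMulVecGenFun_succ {j : ℕ} (h : j + 1 < n) :
    (1 - C (d (j + 1)) * X) *
        (lowerBidiagonal n d s).powMulVecGenFun (stdBasisVec n 1) ⟨j + 1, h⟩
      = C (s (j + 1)) * X *
        (lowerBidiagonal n d s).powMulVecGenFun (stdBasisVec n 1) ⟨j, by omega⟩ := by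
  rw [powMulVecGenFun, one_sub_C_mul_X_mul_mk fun k => by
    rw [pow_succ', ← mulVec_mulVec, mulVec_apply_succ]]
  rw [pow_zero, one_mulVec, show stdBasisVec n 1 ⟨j + 1, h⟩ = 0 by simp [stdBasisVec], map_zero,
    zero_add, mul_comm (C _) X, mul_assoc, ← smul_eq_C_mul]
  rfl

theorem prod_one_sub_C_mul_X_mul_powMulVecGenFun {j : ℕ} (hj : j < n) :
    (∏ m ∈ range (j + 1), (1 - C (d m) * X)) *
        (lowerBidiagonal n d s).powMulVecGenFun (stdBasisVec n 1) ⟨j, hj⟩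
      = C (∏ m ∈ range j, s (m + 1)) * X ^ j := by
  induction j with
  | zero => simpa using one_sub_C_mul_X_mul_powMulVecGenFun_zero d s hj
  | succ j ih =>
    rw [prod_range_succ, mul_assoc, one_sub_C_mul_X_mul_powMulVecGenFun_succ, mul_left_comm, ih,
      prod_range_succ, map_mul, pow_succ]
    ring

theorem pow_mulVec_stdBasisVec_apply_eq {d' : ℕ → ℝ} (j : Fin n)
    (hd : ∏ m ∈ range (j + 1), (1 - C (d m) * X) = ∏ m ∈ range (j + 1), (1 - C (d' m) * X))
    (k : ℕ) :
    (lowerBidiagonal n d s ^ k *ᵥ stdBasisVec n 1) j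
      = (lowerBidiagonal n d' s ^ k *ᵥ stdBasisVec n 1) j := by
  have hunit : IsUnit (∏ m ∈ range (j + 1), (1 - C (d' m) * X) : ℝ⟦X⟧) :=
    IsUnit.prod_iff.2 fun m _ => by simp [isUnit_iff_constantCoeff]
  have h := prod_one_sub_C_mul_X_mul_powMulVecGenFun d s j.isLt
  rw [hd, ← prod_one_sub_C_mul_X_mul_powMulVecGenFun d' s j.isLt] at h
  simpa [powMulVecGenFun] using congrArg (coeff k) (hunit.mul_left_cancel h)

end lowerBidiagonal

theorem Finset.prod_range_apply_ite_succ_eq {α M : Type*} [CommMonoid M] (g : α → M) (a b : α)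
    {i N : ℕ} (hi : 1 ≤ i) (hiN : i ≤ N) :
    ∏ m ∈ range N, g (if m + 1 = i then b else a) = g b * g a ^ (N - 1) := by
  rw [← mul_prod_erase (range N) _ (mem_range.2 (by omega : i - 1 < N)), if_pos (by omega),
    prod_congr rfl fun m hm => by rw [if_neg (by grind)], prod_const, card_erase_of_mem
      (mem_range.2 (by omega)), card_range]

theorem perturbedCascadeMatrix_eq (n : ℕ) (α : ℕ → ℝ) (β ε : ℝ) (i : ℕ) :
    perturbedCascadeMatrix n α β ε i
      = lowerBidiagonal n (fun m => if m + 1 = i then -(β + ε) else -β) (fun m => α (m + 1)) :=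
  rfl

theorem perturbed_cascade_position_independence_decay_general
    (n : ℕ) (α : ℕ → ℝ) (β ε lam : ℝ)
    (hβ : β ≠ 0) (hβε : β + ε ≠ 0) (hbl : β ≠ lam) (hbel : β + ε ≠ lam) :
    (∀ i : ℕ, 1 ≤ i → i ≤ n → IsUnit (perturbedCascadeMatrix n α β ε i) ∧
      IsUnit (1 + lam • (perturbedCascadeMatrix n α β ε i)⁻¹)) ∧
    (∀ i h : ℕ, 1 ≤ i → i < h → h ≤ n →
      ∀ j : Fin n, (h ≤ j.val + 1 ∨ j.val + 1 < i) → ∀ t : ℝ,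
        decaySol n (α 1) lam (perturbedCascadeMatrix n α β ε i) t j
        = decaySol n (α 1) lam (perturbedCascadeMatrix n α β ε h) t j) := by
  have hH (i : ℕ) : IsUnit (perturbedCascadeMatrix n α β ε i).det := by
    rw [perturbedCascadeMatrix_eq, lowerBidiagonal.det_eq]
    exact IsUnit.prod_iff.2 fun r _ => Ne.isUnit (by split_ifs <;> grind)
  have hA (i : ℕ) : IsUnit (perturbedCascadeMatrix n α β ε i + lam • 1).det := by
    rw [perturbedCascadeMatrix_eq, lowerBidiagonal.add_smul_one, lowerBidiagonal.det_eq]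
    exact IsUnit.prod_iff.2 fun r _ => Ne.isUnit (by split_ifs <;> grind)
  refine ⟨fun i _ _ => ⟨(isUnit_iff_isUnit_det _).2 (hH i), ?_⟩, ?_⟩
  · rw [isUnit_iff_isUnit_det]
    refine isUnit_of_mul_isUnit_left (y := (perturbedCascadeMatrix n α β ε i).det) ?_
    rw [← det_mul, one_add_smul_inv_mul_self (hH i)]
    exact hA i
  · intro i h hi hih _ j hj t
    refine decaySol_apply_eq_of_pow_mulVec_apply_eq _ _ (hH i) (hH h) (hA i) (hA h) (fun k => ?_) t
    simp only [perturbedCascadeMatrix_eq, lowerBidiagonal.add_smul_one]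
    refine lowerBidiagonal.pow_mulVec_stdBasisVec_apply_eq _ _ j ?_ k
    rcases hj with hj | hj
    · rw [prod_range_apply_ite_succ_eq (fun c => 1 - C (c + lam) * X) _ _ hi (by omega),
        prod_range_apply_ite_succ_eq (fun c => 1 - C (c + lam) * X) _ _ (by omega) hj]
    · refine prod_congr rfl fun m hm => ?_
      rw [if_neg (by grind), if_neg (by grind)]

/-- each `H_i` and `I + λ H_i⁻¹` are invertible, and for perturbation positions
`i < h`, the exponentially-decaying-stimulus solutions for `H_i` and `H_h` agree on every
component `j` with `h ≤ j ≤ n` (and on every component `j < i`). -/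
theorem perturbed_cascade_position_independence_decay
    (n : ℕ) (hn : 1 ≤ n) (α : ℕ → ℝ) (β ε lam : ℝ)
    (hβ : β ≠ 0) (hβε : β + ε ≠ 0) (hbl : β ≠ lam) (hbel : β + ε ≠ lam) :
    (∀ i : ℕ, 1 ≤ i → i ≤ n → IsUnit (perturbedCascadeMatrix n α β ε i) ∧
      IsUnit (1 + lam • (perturbedCascadeMatrix n α β ε i)⁻¹)) ∧
    (∀ i h : ℕ, 1 ≤ i → i < h → h ≤ n →
      ∀ j : Fin n, (h ≤ j.val + 1 ∨ j.val + 1 < i) → ∀ t : ℝ,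
        decaySol n (α 1) lam (perturbedCascadeMatrix n α β ε i) t j
        = decaySol n (α 1) lam (perturbedCascadeMatrix n α β ε h) t j) :=
  perturbed_cascade_position_independence_decay_general n α β ε lam hβ hβε hbl hbel
end
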